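/- arXiv:2202.12417 — 3 statements merged into one kernel-verified Lean document; each statement's English description precedes it below -/
import Mathlib

section
/- Sequential pruning consistency (backward direction): with the setup of the previous statement, define 'meaningless' recursively in descending layer order: no final channel X^{(L)}_j is meaningless; a channel X^{(l)}_i (l < L) is meaningless iff for every output channel j of layer l+1, either A^{(l+1)}_{i,j} = 0 or X^{(l+1)}_j is meaningless. Then for all l and i, r^{(l)}_i = 1 implies X^{(l)}_i is not meaningless. -/
/-! Every layer has an active channel, and the mask from an active channel `i` to an active
channel `j` of the next layer is `q j`, which is nonzero by the shape constraint. So an active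
meaningless channel would have an active meaningless successor, which downward induction from
the last layer (where nothing is meaningless) rules out. -/

theorem Fin.not_of_active_of_exists_succ {L : ℕ} {ι : Fin (L + 1) → Type*}
    (active bad : ∀ l, ι l → Prop) (hlast : ∀ j, ¬ bad (Fin.last L) j)
    (hstep : ∀ (l : Fin L) i, active l.castSucc i → bad l.castSucc i →
      ∃ j, active l.succ j ∧ bad l.succ j) :
    ∀ l i, active l i → ¬ bad l i := by
  intro l
  induction l using Fin.reverseInduction with
  | last => exact fun j _ => hlast j
  | cast l ih =>
    intro i hi hbad
    obtain ⟨j, hj, hbad_j⟩ := hstep l i hi hbad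
    exact ih j hj hbad_j

theorem exists_mask_ne_zero {κ : Type*} [Fintype κ] {ri : ℕ} {q A : κ → κ → ℕ}
    (hA : ∀ a b, A a b = ri * q a b) (hri : ri ≠ 0) (hq : ∑ a, ∑ b, q a b ≠ 0) :
    ∃ a b, A a b ≠ 0 := by
  obtain ⟨a, -, ha⟩ := Finset.exists_ne_zero_of_sum_ne_zero hq
  obtain ⟨b, -, hb⟩ := Finset.exists_ne_zero_of_sum_ne_zero ha
  exact ⟨a, b, by simp [hA, hri, hb]⟩

theorem stmt_10_general (L : ℕ) (C : Fin (L + 1) → ℕ) (K : Fin L → ℕ)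
    (r : ∀ l, Fin (C l) → ℕ)
    (hrne : ∀ l, ∃ i, r l i = 1)
    (q : ∀ l : Fin L, Fin (C l.succ) → Fin (K l) → Fin (K l) → ℕ)
    (hshape1 : ∀ (l : Fin L) (j : Fin (C l.succ)), r l.succ j ≤ ∑ a, ∑ b, q l j a b)
    (A : ∀ l : Fin L, Fin (C l.castSucc) → Fin (C l.succ) → Fin (K l) → Fin (K l) → ℕ)
    (hA : ∀ l i j a b, A l i j a b = r l.castSucc i * q l j a b)
    (ML : ∀ l, Fin (C l) → Prop)
    (hMLlast : ∀ j : Fin (C (Fin.last L)), ¬ ML (Fin.last L) j)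
    (hMLrec : ∀ (l : Fin L) (i : Fin (C l.castSucc)),
      ML l.castSucc i ↔ ∀ j : Fin (C l.succ), (∀ a b, A l i j a b = 0) ∨ ML l.succ j) :
    ∀ l i, r l i = 1 → ¬ ML l i := by
  refine Fin.not_of_active_of_exists_succ (fun l i => r l i = 1) ML hMLlast ?_
  intro l i hi hML
  obtain ⟨j, hj⟩ := hrne l.succ
  refine ⟨j, hj, ((hMLrec l i).mp hML j).resolve_left fun hzero => ?_⟩
  have hq : ∑ a, ∑ b, q l j a b ≠ 0 := by have := hshape1 l j; omega
  obtain ⟨a, b, hab⟩ := exists_mask_ne_zero (hA l i j) (by omega) hq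
  exact hab (hzero a b)

/-- Sequential pruning consistency (backward): active channels are not meaningless. -/
theorem stmt_10 (L : ℕ) (C : Fin (L + 1) → ℕ) (K : Fin L → ℕ)
    (r : ∀ l, Fin (C l) → ℕ) (hr01 : ∀ l i, r l i = 0 ∨ r l i = 1)
    (hrne : ∀ l, ∃ i, r l i = 1)
    (q : ∀ l : Fin L, Fin (C l.succ) → Fin (K l) → Fin (K l) → ℕ)
    (hq01 : ∀ l j a b, q l j a b = 0 ∨ q l j a b = 1)
    (hshape1 : ∀ (l : Fin L) (j : Fin (C l.succ)), r l.succ j ≤ ∑ a, ∑ b, q l j a b)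
    (hshape2 : ∀ (l : Fin L) (j : Fin (C l.succ)) a b, q l j a b ≤ r l.succ j)
    (A : ∀ l : Fin L, Fin (C l.castSucc) → Fin (C l.succ) → Fin (K l) → Fin (K l) → ℕ)
    (hA : ∀ l i j a b, A l i j a b = r l.castSucc i * q l j a b)
    (ML : ∀ l, Fin (C l) → Prop)
    (hMLlast : ∀ j : Fin (C (Fin.last L)), ¬ ML (Fin.last L) j)
    (hMLrec : ∀ (l : Fin L) (i : Fin (C l.castSucc)),
      ML l.castSucc i ↔ ∀ j : Fin (C l.succ), (∀ a b, A l i j a b = 0) ∨ ML l.succ j) :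
    ∀ l i, r l i = 1 → ¬ ML l i :=
  stmt_10_general L C K r hrne q hshape1 A hA ML hMLlast hMLrec
end

section
/- Skip-addition pruning consistency: augment the sequential setting with a set P of skip-addition pairs (s,t) with matching dimensions, where the input activation of layer t satisfies u^{(t)} ≼ v^{(t)} ≼ u^{(t)} + v^{(s)} and 'trivially zero' for the post-addition feature map V^{(t)}_j holds iff both U^{(t)}_j and V^{(s)}_j are trivially zero (and v^{(t)} = u^{(t)} with V^{(t)} = U^{(t)} when t has no incoming skip). Assume ‖u^{(l)}‖₁ ≥ 1 and ‖v^{(l)}‖₁ ≥ 1 for all l, masks A^{(t)}_{i,j,a,b} = v^{(t-1)}_i q^{(t)}_{j,a,b}, and shape constraints u^{(t)}_j ≤ Σ_{a,b} q^{(t)}_{j,a,b}, q^{(t)}_{j,a,b} ≤ u^{(t)}_j. Assume also s < t for all (s,t) ∈ P. Then v^{(l)}_j = 1 implies V^{(l)}_j is not trivially zero, for all l, j. -/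
/-! Induction on the layer index. An active channel of `V⁽ᵗ⁾` either comes from an active
output channel of the `t`-th convolution, or (through a skip-addition `(s, t)`) from an
active channel of the earlier `V⁽ˢ⁾`. An active output channel `j` has a nonzero kernel entry
`q⁽ᵗ⁾_{j,a,b}`, so it reads every active input channel of `V⁽ᵗ⁻¹⁾`; since some input
channel is active, and hence not trivially zero by induction, `U⁽ᵗ⁾_j` is not trivially zero. -/

theorem exists_ne_zero_of_double_sum_pos {κ : Type*} [Fintype κ] {q : κ → κ → ℕ}
    (hq : 0 < ∑ a, ∑ b, q a b) : ∃ a b, q a b ≠ 0 := by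
  obtain ⟨a, -, ha⟩ := Finset.exists_ne_zero_of_sum_ne_zero hq.ne'
  obtain ⟨b, -, hb⟩ := Finset.exists_ne_zero_of_sum_ne_zero ha
  exact ⟨a, b, hb⟩

theorem not_forall_masked_or_trivially_zero {ι κ : Type*} [Fintype κ]
    {vin : ι → ℕ} {q : κ → κ → ℕ} {A : ι → κ → κ → ℕ} {Z : ι → Prop}
    (hA : ∀ i a b, A i a b = vin i * q a b) (hq : 0 < ∑ a, ∑ b, q a b)
    {i : ι} (hvi : vin i ≠ 0) (hZi : ¬ Z i) :
    ¬ ∀ i, (∀ a b, A i a b = 0) ∨ Z i := by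
  obtain ⟨a, b, hab⟩ := exists_ne_zero_of_double_sum_pos hq
  intro h
  rcases h i with hA0 | hZ
  · exact mul_ne_zero hvi hab (hA i a b ▸ hA0 a b)
  · exact hZi hZ

theorem stmt_12_general (L : ℕ) (C : Fin (L + 1) → ℕ) (K : Fin L → ℕ)
    (u v : ∀ l, Fin (C l) → ℕ)
    (hu01 : ∀ l i, u l i = 0 ∨ u l i = 1) (hv01 : ∀ l i, v l i = 0 ∨ v l i = 1)
    (hvne : ∀ l, ∃ i, v l i = 1)
    (q : ∀ l : Fin L, Fin (C l.succ) → Fin (K l) → Fin (K l) → ℕ)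
    (hshape1 : ∀ (l : Fin L) (j : Fin (C l.succ)), u l.succ j ≤ ∑ a, ∑ b, q l j a b)
    (A : ∀ l : Fin L, Fin (C l.castSucc) → Fin (C l.succ) → Fin (K l) → Fin (K l) → ℕ)
    (hA : ∀ l i j a b, A l i j a b = v l.castSucc i * q l j a b)
    (P : Set (Fin (L + 1) × Fin (L + 1)))
    (hPdim : ∀ p ∈ P, C p.1 = C p.2 ∧ p.1.val < p.2.val)
    (TZU TZV : ∀ l, Fin (C l) → Prop)
    (hTZV0 : ∀ j : Fin (C 0), ¬ TZV 0 j)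
    (hTZU : ∀ (l : Fin L) (j : Fin (C l.succ)),
      TZU l.succ j ↔ ∀ i : Fin (C l.castSucc), (∀ a b, A l i j a b = 0) ∨ TZV l.castSucc i)
    (hnoskip : ∀ t : Fin (L + 1), t ≠ 0 → (∀ s, (s, t) ∉ P) →
      (∀ j, v t j = u t j) ∧ (∀ j, TZV t j ↔ TZU t j))
    (hskip : ∀ s t : Fin (L + 1), (s, t) ∈ P → ∀ (hdim : C s = C t),
      (∀ j, u t j ≤ v t j ∧ v t j ≤ u t j + v s (Fin.cast hdim.symm j)) ∧
      (∀ j, TZV t j ↔ (TZU t j ∧ TZV s (Fin.cast hdim.symm j)))) :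
    ∀ l j, v l j = 1 → ¬ TZV l j := by
  intro l
  induction l using WellFoundedLT.induction with
  | _ l ih =>
  intro j hvj hZ
  obtain rfl | ⟨m, rfl⟩ := Fin.eq_zero_or_eq_succ l
  · exact hTZV0 j hZ
  have hU : ∀ j, u m.succ j = 1 → ¬ TZU m.succ j := fun j hu hZU => by
    obtain ⟨i, hvi⟩ := hvne m.castSucc
    exact not_forall_masked_or_trivially_zero (hA m · j)
      ((hshape1 m j).trans_lt' (by omega)) (hvi ▸ one_ne_zero)
      (ih _ Fin.castSucc_lt_succ i hvi) ((hTZU m j).1 hZU)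
  by_cases hs : ∃ s, (s, m.succ) ∈ P
  · obtain ⟨s, hsP⟩ := hs
    obtain ⟨hdim, hlt⟩ := hPdim _ hsP
    obtain ⟨hle, hiff⟩ := hskip s _ hsP hdim
    obtain ⟨hZU, hZs⟩ := (hiff j).1 hZ
    have hactive : u m.succ j = 1 ∨ v s (Fin.cast hdim.symm j) = 1 := by
      have := (hle j).2
      have := hu01 m.succ j
      have := hv01 s (Fin.cast hdim.symm j)
      omega
    rcases hactive with hu | hvs
    · exact hU j hu hZU
    · exact ih s hlt _ hvs hZs
  · simp only [not_exists] at hs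
    obtain ⟨hvu, hiff⟩ := hnoskip _ (Fin.succ_ne_zero m) hs
    exact hU j (hvu j ▸ hvj) ((hiff j).1 hZ)

/-- Skip-addition pruning consistency: active input channels are not trivially zero. -/
theorem stmt_12 (L : ℕ) (C : Fin (L + 1) → ℕ) (K : Fin L → ℕ)
    (u v : ∀ l, Fin (C l) → ℕ)
    (hu01 : ∀ l i, u l i = 0 ∨ u l i = 1) (hv01 : ∀ l i, v l i = 0 ∨ v l i = 1)
    (hune : ∀ l, ∃ i, u l i = 1) (hvne : ∀ l, ∃ i, v l i = 1)
    (q : ∀ l : Fin L, Fin (C l.succ) → Fin (K l) → Fin (K l) → ℕ)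
    (hq01 : ∀ l j a b, q l j a b = 0 ∨ q l j a b = 1)
    (hshape1 : ∀ (l : Fin L) (j : Fin (C l.succ)), u l.succ j ≤ ∑ a, ∑ b, q l j a b)
    (hshape2 : ∀ (l : Fin L) (j : Fin (C l.succ)) a b, q l j a b ≤ u l.succ j)
    (A : ∀ l : Fin L, Fin (C l.castSucc) → Fin (C l.succ) → Fin (K l) → Fin (K l) → ℕ)
    (hA : ∀ l i j a b, A l i j a b = v l.castSucc i * q l j a b)
    (P : Set (Fin (L + 1) × Fin (L + 1)))
    (hPdim : ∀ p ∈ P, C p.1 = C p.2 ∧ p.1.val < p.2.val)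
    (TZU TZV : ∀ l, Fin (C l) → Prop)
    (hTZV0 : ∀ j : Fin (C 0), ¬ TZV 0 j)
    (hTZU : ∀ (l : Fin L) (j : Fin (C l.succ)),
      TZU l.succ j ↔ ∀ i : Fin (C l.castSucc), (∀ a b, A l i j a b = 0) ∨ TZV l.castSucc i)
    (hnoskip : ∀ t : Fin (L + 1), t ≠ 0 → (∀ s, (s, t) ∉ P) →
      (∀ j, v t j = u t j) ∧ (∀ j, TZV t j ↔ TZU t j))
    (hskip : ∀ s t : Fin (L + 1), (s, t) ∈ P → ∀ (hdim : C s = C t),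
      (∀ j, u t j ≤ v t j ∧ v t j ≤ u t j + v s (Fin.cast hdim.symm j)) ∧
      (∀ j, TZV t j ↔ (TZU t j ∧ TZV s (Fin.cast hdim.symm j)))) :
    ∀ l j, v l j = 1 → ¬ TZV l j :=
  stmt_12_general L C K u v hu01 hv01 hvne q hshape1 A hA P hPdim TZU TZV hTZV0 hTZU hnoskip hskip
end

section
/- Skip-addition meaninglessness consistency: in the skip-addition setting with constraints u^{(t)} ≼ v^{(t)}, ‖u^{(l)}‖₁ ≥ 1 for all l, masks A^{(t)}_{i,j,a,b} = v^{(t-1)}_i q^{(t)}_{j,a,b}, and shape constraints u^{(t)}_j ≤ Σ_{a,b} q^{(t)}_{j,a,b}, q^{(t)}_{j,a,b} ≤ u^{(t)}_j, where 'meaningless' is defined by: U^{(L)} channels are never meaningless; V^{(t)}_i is meaningless iff for all j, A^{(t+1)}_{i,j} = 0 or U^{(t+1)}_j is meaningless; and U^{(t)}_i is meaningless iff V^{(t)}_i is meaningless — then u^{(l)}_i = 1 implies U^{(l)}_i is not meaningless, for all l, i. -/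
theorem Finset.exists_ne_zero_of_sum_sum_ne_zero {α β M : Type*} [AddCommMonoid M]
    {s : Finset α} {t : Finset β} {f : α → β → M} (h : ∑ a ∈ s, ∑ b ∈ t, f a b ≠ 0) :
    ∃ a ∈ s, ∃ b ∈ t, f a b ≠ 0 := by
  obtain ⟨a, ha, hsum⟩ := Finset.exists_ne_zero_of_sum_ne_zero h
  obtain ⟨b, hb, hab⟩ := Finset.exists_ne_zero_of_sum_ne_zero hsum
  exact ⟨a, ha, b, hb, hab⟩

theorem stmt_13_general (L : ℕ) (C : Fin (L + 1) → ℕ) (K : Fin L → ℕ)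
    (u v : ∀ l, Fin (C l) → ℕ)
    (huv : ∀ l i, u l i ≤ v l i)
    (hune : ∀ l, ∃ i, u l i = 1)
    (q : ∀ l : Fin L, Fin (C l.succ) → Fin (K l) → Fin (K l) → ℕ)
    (hshape1 : ∀ (l : Fin L) (j : Fin (C l.succ)), u l.succ j ≤ ∑ a, ∑ b, q l j a b)
    (A : ∀ l : Fin L, Fin (C l.castSucc) → Fin (C l.succ) → Fin (K l) → Fin (K l) → ℕ)
    (hA : ∀ l i j a b, A l i j a b = v l.castSucc i * q l j a b)
    (MLU MLV : ∀ l, Fin (C l) → Prop)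
    (hMLUlast : ∀ i : Fin (C (Fin.last L)), ¬ MLU (Fin.last L) i)
    (hMLV : ∀ (l : Fin L) (i : Fin (C l.castSucc)),
      MLV l.castSucc i ↔ ∀ j : Fin (C l.succ), (∀ a b, A l i j a b = 0) ∨ MLU l.succ j)
    (hMLUV : ∀ (l : Fin L) (i : Fin (C l.castSucc)),
      MLU l.castSucc i ↔ MLV l.castSucc i) :
    ∀ l i, u l i = 1 → ¬ MLU l i := by
  intro l
  induction l using Fin.reverseInduction with
  | last => exact fun i _ => hMLUlast i
  | cast l ih =>
    intro i hi hML
    obtain ⟨j, hj⟩ := hune l.succ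
    obtain ⟨a, -, b, -, hq⟩ : ∃ a ∈ Finset.univ, ∃ b ∈ Finset.univ, q l j a b ≠ 0 :=
      Finset.exists_ne_zero_of_sum_sum_ne_zero (by have := hshape1 l j; omega)
    have hAab : A l i j a b ≠ 0 := by
      rw [hA]
      exact mul_ne_zero (by have := huv l.castSucc i; omega) hq
    rcases (hMLV l i).mp ((hMLUV l i).mp hML) j with hA0 | hMLj
    · exact hAab (hA0 a b)
    · exact ih j hj hMLj

/-- Skip-addition meaninglessness consistency: active output channels are not
meaningless. -/
theorem stmt_13 (L : ℕ) (C : Fin (L + 1) → ℕ) (K : Fin L → ℕ)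
    (u v : ∀ l, Fin (C l) → ℕ)
    (hu01 : ∀ l i, u l i = 0 ∨ u l i = 1) (hv01 : ∀ l i, v l i = 0 ∨ v l i = 1)
    (huv : ∀ l i, u l i ≤ v l i)
    (hune : ∀ l, ∃ i, u l i = 1)
    (q : ∀ l : Fin L, Fin (C l.succ) → Fin (K l) → Fin (K l) → ℕ)
    (hq01 : ∀ l j a b, q l j a b = 0 ∨ q l j a b = 1)
    (hshape1 : ∀ (l : Fin L) (j : Fin (C l.succ)), u l.succ j ≤ ∑ a, ∑ b, q l j a b)
    (hshape2 : ∀ (l : Fin L) (j : Fin (C l.succ)) a b, q l j a b ≤ u l.succ j)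
    (A : ∀ l : Fin L, Fin (C l.castSucc) → Fin (C l.succ) → Fin (K l) → Fin (K l) → ℕ)
    (hA : ∀ l i j a b, A l i j a b = v l.castSucc i * q l j a b)
    (MLU MLV : ∀ l, Fin (C l) → Prop)
    (hMLUlast : ∀ i : Fin (C (Fin.last L)), ¬ MLU (Fin.last L) i)
    (hMLV : ∀ (l : Fin L) (i : Fin (C l.castSucc)),
      MLV l.castSucc i ↔ ∀ j : Fin (C l.succ), (∀ a b, A l i j a b = 0) ∨ MLU l.succ j)
    (hMLUV : ∀ (l : Fin L) (i : Fin (C l.castSucc)),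
      MLU l.castSucc i ↔ MLV l.castSucc i) :
    ∀ l i, u l i = 1 → ¬ MLU l i :=
  stmt_13_general L C K u v huv hune q hshape1 A hA MLU MLV hMLUlast hMLV hMLUV
end
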